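/- arXiv:2103.07827 — 2 statements merged into one kernel-verified Lean document; each statement's English description precedes it below -/
import Mathlib

section
/- For any complex matrices M (m×ℓ) and N (ℓ×n), the Schatten 1-norm satisfies ‖M·N‖₁ = ‖|M|·|N†|‖₁, where |X| = √(X†X). -/
open Matrix ComplexOrder

/-- Square root of a positive semidefinite matrix, with the meaning it had in Mathlib
(December 2024) under the name `Matrix.PosSemidef.sqrt` (since removed). -/
noncomputable def Matrix.PosSemidef.sqrt {n 𝕜 : Type*} [Fintype n] [DecidableEq n] [RCLike 𝕜]
    {A : Matrix n n 𝕜} (hA : A.PosSemidef) : Matrix n n 𝕜 :=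
  hA.1.eigenvectorUnitary.1 * diagonal ((↑) ∘ (√·) ∘ hA.1.eigenvalues) *
  (star hA.1.eigenvectorUnitary : Matrix n n 𝕜)

/-- The Schatten 1-norm (trace norm): ‖M‖₁ = tr √(MᴴM). -/
noncomputable def traceNorm {n m : Type*} [Fintype n] [Fintype m] [DecidableEq m]
    (M : Matrix n m ℂ) : ℝ :=
  ((Matrix.posSemidef_conjTranspose_mul_self M).sqrt.trace).re

/-!
Write `|X| = √(XᴴX)`. The trace norm `‖X‖₁ = tr |X|` depends on `X` only through `XᴴX`, and
`‖Xᴴ‖₁ = ‖X‖₁`: for `f` with `f 0 = 0`, interpolating `f` on `{0} ∪ σ(XᴴX) ∪ σ(XXᴴ)` by a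
polynomial `t·r(t)` turns `tr f(XᴴX) = tr f(XXᴴ)` into cyclicity of the trace. Since
`(MN)ᴴ(MN) = Nᴴ|M|²N = (|M|N)ᴴ(|M|N)`, we get `‖MN‖₁ = ‖|M|N‖₁`, and then
`‖|M|N‖₁ = ‖Nᴴ|M|‖₁ = ‖|Nᴴ||M|‖₁ = ‖|M||Nᴴ|‖₁`.
-/

open Polynomial

lemma Set.Finite.exists_polynomial_eqOn {K : Type*} [Field K] {s : Set K} (hs : s.Finite)
    (f : K → K) : ∃ q : K[X], s.EqOn (fun x => q.eval x) f := by
  classical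
  refine ⟨Lagrange.interpolate hs.toFinset id f, fun x hx => ?_⟩
  simpa using Lagrange.eval_interpolate_at_node f (Set.injOn_id _) (hs.mem_toFinset.2 hx)

namespace Matrix

variable {a b : Type*} [Fintype a] [DecidableEq a] [Fintype b] [DecidableEq b]

section aeval

variable {R S : Type*} [CommSemiring R] [CommSemiring S] [Algebra S R]

lemma mul_pow_mul_comm (A : Matrix a b R) (B : Matrix b a R) (n : ℕ) :
    A * (B * A) ^ n = (A * B) ^ n * A := by
  induction n with
  | zero => simp
  | succ n ih => rw [pow_succ, pow_succ, ← Matrix.mul_assoc, ih]; simp only [Matrix.mul_assoc]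

lemma mul_aeval_mul_comm (A : Matrix a b R) (B : Matrix b a R) (q : S[X]) :
    A * aeval (B * A) q = aeval (A * B) q * A := by
  induction q using Polynomial.induction_on' with
  | add p q hp hq => rw [map_add, map_add, Matrix.mul_add, Matrix.add_mul, hp, hq]
  | monomial n c =>
    simp only [aeval_monomial, ← Algebra.smul_def, Matrix.mul_smul, Matrix.smul_mul,
      mul_pow_mul_comm]

lemma trace_aeval_mul_comm (A : Matrix a b R) (B : Matrix b a R) {q : S[X]}
    (hq : q.coeff 0 = 0) : (aeval (B * A) q).trace = (aeval (A * B) q).trace := by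
  obtain ⟨r, rfl⟩ := X_dvd_iff.2 hq
  calc (aeval (B * A) (X * r)).trace = (B * (A * aeval (B * A) r)).trace := by
        rw [map_mul, aeval_X, Matrix.mul_assoc]
    _ = (aeval (A * B) r * A * B).trace := by
        rw [mul_aeval_mul_comm, trace_mul_comm, Matrix.mul_assoc]
    _ = (aeval (A * B) (X * r)).trace := by
        rw [map_mul, aeval_X, Matrix.mul_assoc, trace_mul_comm]

end aeval

variable {𝕜 : Type*} [RCLike 𝕜]

lemma trace_cfc_conjTranspose_mul_self (A : Matrix a b 𝕜) {f : ℝ → ℝ} (hf : f 0 = 0) :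
    (cfc f (Aᴴ * A)).trace = (cfc f (A * Aᴴ)).trace := by
  obtain ⟨q, hq⟩ := ((finite_real_spectrum (A := Aᴴ * A)).union
    (finite_real_spectrum (A := A * Aᴴ))).insert 0 |>.exists_polynomial_eqOn f
  have h₁ : cfc f (Aᴴ * A) = aeval (Aᴴ * A) q := by
    rw [← cfc_polynomial q _ (isHermitian_conjTranspose_mul_self A)]
    exact cfc_congr fun x hx => (hq (by simp [hx])).symm
  have h₂ : cfc f (A * Aᴴ) = aeval (A * Aᴴ) q := by
    rw [← cfc_polynomial q _ (isHermitian_mul_conjTranspose_self A)]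
    exact cfc_congr fun x hx => (hq (by simp [hx])).symm
  rw [h₁, h₂]
  refine trace_aeval_mul_comm A Aᴴ ?_
  rw [coeff_zero_eq_eval_zero]
  exact (hq (Set.mem_insert 0 _)).trans hf

open scoped MatrixOrder

lemma PosSemidef.sqrt_eq_cfcSqrt {A : Matrix a a 𝕜} (hA : A.PosSemidef) :
    hA.sqrt = CFC.sqrt A := by
  rw [CFC.sqrt_eq_real_sqrt A hA.nonneg, cfcₙ_eq_cfc, hA.1.cfc_eq]
  rfl

lemma PosSemidef.isHermitian_sqrt {A : Matrix a a 𝕜} (hA : A.PosSemidef) :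
    hA.sqrt.IsHermitian := by
  rw [hA.sqrt_eq_cfcSqrt]
  exact (CFC.sqrt_nonneg A).isSelfAdjoint

lemma PosSemidef.sqrt_mul_self {A : Matrix a a 𝕜} (hA : A.PosSemidef) :
    hA.sqrt * hA.sqrt = A := by
  rw [hA.sqrt_eq_cfcSqrt]
  exact CFC.sqrt_mul_sqrt_self A hA.nonneg

end Matrix

section traceNorm

variable {a b c : Type*} [Fintype a] [Fintype b] [Fintype c]

open scoped MatrixOrder in
lemma traceNorm_eq_re_trace_cfc_sqrt [DecidableEq b] (X : Matrix a b ℂ) :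
    traceNorm X = (cfc Real.sqrt (Xᴴ * X)).trace.re := by
  rw [traceNorm, PosSemidef.sqrt_eq_cfcSqrt,
    CFC.sqrt_eq_real_sqrt _ (posSemidef_conjTranspose_mul_self X).nonneg, cfcₙ_eq_cfc]

lemma traceNorm_eq_of_conjTranspose_mul_self_eq [DecidableEq b] {X : Matrix a b ℂ}
    {Y : Matrix c b ℂ} (h : Xᴴ * X = Yᴴ * Y) : traceNorm X = traceNorm Y := by
  rw [traceNorm_eq_re_trace_cfc_sqrt, traceNorm_eq_re_trace_cfc_sqrt, h]

lemma traceNorm_conjTranspose [DecidableEq a] [DecidableEq b] (X : Matrix a b ℂ) :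
    traceNorm Xᴴ = traceNorm X := by
  rw [traceNorm_eq_re_trace_cfc_sqrt, traceNorm_eq_re_trace_cfc_sqrt, conjTranspose_conjTranspose,
    trace_cfc_conjTranspose_mul_self X Real.sqrt_zero]

lemma traceNorm_mul_eq_traceNorm_sqrt_mul [DecidableEq b] [DecidableEq c] (M : Matrix a b ℂ)
    (N : Matrix b c ℂ) :
    traceNorm (M * N) = traceNorm ((posSemidef_conjTranspose_mul_self M).sqrt * N) := by
  set hM := posSemidef_conjTranspose_mul_self M
  apply traceNorm_eq_of_conjTranspose_mul_self_eq
  calc (M * N)ᴴ * (M * N) = Nᴴ * (Mᴴ * M) * N := by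
        simp only [conjTranspose_mul, Matrix.mul_assoc]
    _ = Nᴴ * (hM.sqrt * hM.sqrt) * N := by rw [hM.sqrt_mul_self]
    _ = (hM.sqrt * N)ᴴ * (hM.sqrt * N) := by
        simp only [conjTranspose_mul, hM.isHermitian_sqrt.eq, Matrix.mul_assoc]

end traceNorm

/-- ‖M·N‖₁ = ‖|M|·|Nᴴ|‖₁ where |X| = √(XᴴX). -/
theorem traceNorm_mul_eq_traceNorm_abs_mul_abs {m l n : ℕ}
    (M : Matrix (Fin m) (Fin l) ℂ) (N : Matrix (Fin l) (Fin n) ℂ) :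
    traceNorm (M * N) =
      traceNorm ((Matrix.posSemidef_conjTranspose_mul_self M).sqrt *
        (Matrix.posSemidef_conjTranspose_mul_self Nᴴ).sqrt) := by
  set A := (posSemidef_conjTranspose_mul_self M).sqrt
  set B := (posSemidef_conjTranspose_mul_self Nᴴ).sqrt
  have hA : Aᴴ = A := PosSemidef.isHermitian_sqrt _
  have hB : Bᴴ = B := PosSemidef.isHermitian_sqrt _
  calc traceNorm (M * N) = traceNorm (A * N) := traceNorm_mul_eq_traceNorm_sqrt_mul M N
    _ = traceNorm (Nᴴ * A) := by rw [← traceNorm_conjTranspose, conjTranspose_mul, hA]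
    _ = traceNorm (B * A) := traceNorm_mul_eq_traceNorm_sqrt_mul Nᴴ A
    _ = traceNorm (A * B) := by rw [← traceNorm_conjTranspose, conjTranspose_mul, hA, hB]
end

section
/- Tightness of the factor 4 in the quantum union bound: for each m ≥ 2 and small δ > 0, in ℝ² with initial state |0⟩ and projectors A_t onto the line at angle (−1)^t·δ from |0⟩, one has Loss = m·sin²δ and Fail = 1 − (1−sin²δ)(1−sin²2δ)^{m−1}; consequently Fail/Loss → (4m−3)/m as δ → 0⁺, which tends to 4 as m → ∞. -/
open Matrix Filter

/-- Projector onto the line in ℝ² at angle θ from |0⟩. -/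
noncomputable def lineProj (θ : ℝ) : Matrix (Fin 2) (Fin 2) ℝ :=
  ![![Real.cos θ ^ 2, Real.cos θ * Real.sin θ],
    ![Real.cos θ * Real.sin θ, Real.sin θ ^ 2]]

/-- Success probability of sequentially measuring |0⟩⟨0| with the projectors
`A_t` onto the lines at angles (−1)ᵗ·δ, t = 1,…,m:  tr(A_m⋯A₁ ρ A₁⋯A_m). -/
noncomputable def succProb (m : ℕ) (δ : ℝ) : ℝ :=
  let ρ : Matrix (Fin 2) (Fin 2) ℝ := ![![1, 0], ![0, 0]]
  let B := (List.ofFn (fun t : Fin m => lineProj ((-1 : ℝ) ^ (t.1 + 1) * δ))).reverse.prod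
  (B * ρ * Bᵀ).trace

/-! Each projector maps the unit vector at angle φ to `cos (θ - φ)` times the unit vector at
angle θ, so the sequence of measurements maps |0⟩ to `cos δ * cos (2δ) ^ (m - 1)` times a unit
vector, and `Succ = cos² δ · cos² (2δ) ^ (m - 1)`. In terms of `s = sin² δ` this is
`g s = (1 - s) (1 - 4 s (1 - s)) ^ (m - 1)`, so `Fail / Loss = (g 0 - g s) / (m s)` tends to
`-g'(0) / m = (4m - 3) / m`. -/

open Real Finset Topology

lemma lineProj_mulVec (θ φ : ℝ) :
    lineProj θ *ᵥ ![cos φ, sin φ] = cos (θ - φ) • ![cos θ, sin θ] := by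
  ext i
  fin_cases i <;> simp [lineProj, mulVec, dotProduct, cos_sub] <;> ring

lemma lineProj_prod_mulVec (θ : ℕ → ℝ) (m : ℕ) :
    (List.ofFn fun t : Fin m => lineProj (θ (t.1 + 1))).reverse.prod *ᵥ ![cos (θ 0), sin (θ 0)]
      = (∏ t ∈ range m, cos (θ (t + 1) - θ t)) • ![cos (θ m), sin (θ m)] := by
  induction m with
  | zero => simp
  | succ n ih =>
    rw [List.ofFn_succ', List.concat_eq_append, List.reverse_append, List.reverse_singleton,
      List.singleton_append, List.prod_cons, ← mulVec_mulVec]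
    simp only [Fin.val_castSucc, Fin.val_last]
    rw [ih, mulVec_smul, lineProj_mulVec, smul_smul, prod_range_succ, mul_comm]

lemma trace_mul_vecMulVec_mul_transpose {ι κ R : Type*} [Fintype ι] [Fintype κ] [CommSemiring R]
    (B : Matrix ι κ R) (v : κ → R) :
    (B * vecMulVec v v * Bᵀ).trace = (B *ᵥ v) ⬝ᵥ (B *ᵥ v) := by
  rw [mul_vecMulVec, vecMulVec_mul, vecMul_transpose, trace_vecMulVec]

lemma dotProduct_self_smul_cos_sin (c φ : ℝ) :
    (c • ![cos φ, sin φ]) ⬝ᵥ (c • ![cos φ, sin φ]) = c ^ 2 := by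
  simp only [dotProduct, Fin.sum_univ_two, Pi.smul_apply, smul_eq_mul, cons_val_zero,
    cons_val_one, cons_val_fin_one]
  linear_combination c ^ 2 * sin_sq_add_cos_sq φ

lemma cos_neg_one_pow_mul (n : ℕ) (x : ℝ) : cos ((-1) ^ n * x) = cos x := by
  rcases neg_one_pow_eq_or ℝ n with h | h <;> simp [h]

lemma sin_sq_neg_one_pow_mul (n : ℕ) (x : ℝ) : sin ((-1) ^ n * x) ^ 2 = sin x ^ 2 := by
  rcases neg_one_pow_eq_or ℝ n with h | h <;> simp [h]

lemma trace_mul_one_sub_lineProj (θ : ℝ) :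
    ((of ![![1, 0], ![0, 0]] : Matrix (Fin 2) (Fin 2) ℝ) * (1 - lineProj θ)).trace
      = sin θ ^ 2 := by
  rw [trace_fin_two]
  simp only [Matrix.mul_apply, Fin.sum_univ_two, Matrix.sub_apply]
  simp [lineProj, sin_sq]

lemma succProb_succ (n : ℕ) (δ : ℝ) :
    succProb (n + 1) δ = cos δ ^ 2 * (cos (2 * δ) ^ 2) ^ n := by
  -- `θ 0 = 0`, not `(-1) ^ 0 * δ`: the initial state |0⟩ is the unit vector at angle 0
  set θ : ℕ → ℝ := fun t => if t = 0 then 0 else (-1) ^ t * δ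
  have hρ : (![![1, 0], ![0, 0]] : Matrix (Fin 2) (Fin 2) ℝ)
      = vecMulVec ![cos (θ 0), sin (θ 0)] ![cos (θ 0), sin (θ 0)] := by
    ext i j; fin_cases i <;> fin_cases j <;> simp [θ, vecMulVec]
  have hB : (fun t : Fin (n + 1) => lineProj ((-1 : ℝ) ^ (t.1 + 1) * δ))
      = fun t => lineProj (θ (t.1 + 1)) := by
    simp [θ]
  have hprod : ∏ t ∈ range (n + 1), cos (θ (t + 1) - θ t) = cos δ * cos (2 * δ) ^ n := by
    rw [prod_range_succ', mul_comm, prod_congr rfl (g := fun _ => cos (2 * δ)) fun k _ => ?_,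
      prod_const, card_range]
    · simp [θ]
    · simp only [θ, add_eq_zero, one_ne_zero, and_false, if_false]
      rw [show (-1 : ℝ) ^ (k + 1 + 1) * δ - (-1) ^ (k + 1) * δ = (-1) ^ k * (2 * δ) by ring,
        cos_neg_one_pow_mul]
  simp only [succProb, hρ, hB]
  rw [trace_mul_vecMulVec_mul_transpose, lineProj_prod_mulVec, dotProduct_self_smul_cos_sin, hprod]
  simp [mul_pow, ← pow_mul, mul_comm]

lemma sin_two_mul_sq (x : ℝ) : sin (2 * x) ^ 2 = 4 * sin x ^ 2 * (1 - sin x ^ 2) := by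
  rw [sin_two_mul, ← cos_sq']
  ring

lemma hasDerivAt_one_sub_mul_pow (n : ℕ) :
    HasDerivAt (fun s : ℝ => (1 - s) * (1 - 4 * s * (1 - s)) ^ n) (-(4 * n + 1)) 0 := by
  have hq : HasDerivAt (fun s : ℝ => 1 - 4 * s * (1 - s)) (-4) 0 :=
    (((hasDerivAt_id' 0).const_mul 4).fun_mul ((hasDerivAt_id' 0).const_sub 1)).const_sub 1
      |>.congr_deriv (by simp)
  refine (((hasDerivAt_id' (0 : ℝ)).const_sub 1).fun_mul (hq.fun_pow n)).congr_deriv ?_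
  simp
  ring

lemma tendsto_sin_sq_nhdsGT_zero : Tendsto (fun δ => sin δ ^ 2) (𝓝[>] 0) (𝓝[>] 0) := by
  refine tendsto_nhdsWithin_iff.2 ⟨?_, ?_⟩
  · exact ((continuous_sin.pow 2).tendsto' 0 0 (by simp)).mono_left nhdsWithin_le_nhds
  · filter_upwards [Ioo_mem_nhdsGT pi_pos] with δ hδ
    exact pow_pos (sin_pos_of_pos_of_lt_pi hδ.1 hδ.2) 2

lemma tendsto_slope_sin_sq_of_hasDerivAt {g : ℝ → ℝ} {g' : ℝ} (h : HasDerivAt g g' 0) :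
    Tendsto (fun δ => (g (sin δ ^ 2) - g 0) / sin δ ^ 2) (𝓝[>] 0) (𝓝 g') := by
  convert h.tendsto_slope_zero_right.comp tendsto_sin_sq_nhdsGT_zero using 2 with δ
  simp [div_eq_inv_mul]

lemma tendsto_mul_sub_div_natCast (a b : ℝ) :
    Tendsto (fun k : ℕ => (a * k - b) / k) atTop (𝓝 a) := by
  have h : Tendsto (fun k : ℕ => a - b / k) atTop (𝓝 (a - 0)) :=
    tendsto_const_nhds.sub (tendsto_const_nhds.div_atTop tendsto_natCast_atTop_atTop)
  rw [sub_zero] at h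
  refine h.congr' ?_
  filter_upwards [eventually_ne_atTop 0] with k hk
  field_simp

/-- Tightness of the factor 4 in the quantum union bound. -/
theorem union_bound_factor_four_tight (m : ℕ) (hm : 2 ≤ m) :
    (∀ δ : ℝ, ∀ t : Fin m,
        ((Matrix.of ![![1, 0], ![0, 0]] : Matrix (Fin 2) (Fin 2) ℝ) *
            (1 - lineProj ((-1 : ℝ) ^ (t.1 + 1) * δ))).trace = Real.sin δ ^ 2) ∧
    (∀ δ : ℝ, 1 - succProb m δ =
        1 - (1 - Real.sin δ ^ 2) * (1 - Real.sin (2 * δ) ^ 2) ^ (m - 1)) ∧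
    Tendsto (fun δ : ℝ => (1 - succProb m δ) / (m * Real.sin δ ^ 2))
      (nhdsWithin 0 (Set.Ioi 0)) (nhds ((4 * (m : ℝ) - 3) / (m : ℝ))) ∧
    Tendsto (fun k : ℕ => (4 * (k : ℝ) - 3) / k) atTop (nhds 4) := by
  obtain ⟨n, rfl⟩ := Nat.exists_eq_add_of_le' (one_le_two.trans hm)
  have hsucc (δ : ℝ) :
      succProb (n + 1) δ = (1 - sin δ ^ 2) * (1 - sin (2 * δ) ^ 2) ^ n := by
    rw [succProb_succ, cos_sq', cos_sq']
  refine ⟨fun δ t => by rw [trace_mul_one_sub_lineProj, sin_sq_neg_one_pow_mul],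
    fun δ => by rw [hsucc, Nat.add_sub_cancel], ?_, tendsto_mul_sub_div_natCast 4 3⟩
  have hslope := tendsto_slope_sin_sq_of_hasDerivAt (hasDerivAt_one_sub_mul_pow n)
  convert hslope.neg.div_const (n + 1 : ℝ) using 2 with δ
  · rw [hsucc, sin_two_mul_sq, div_mul_eq_div_div_swap]
    push_cast
    ring
  · push_cast
    ring
end
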